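/- Let S be a Cu-semigroup and let T_0 ⊆ S be a countably based sub-Cu-semigroup. Then there exists a countably based sub-Cu-semigroup T ⊆ S with T_0 ⊆ T and dim(T) ≤ dim(S). -/
import Mathlib


def WayBelow {S : Type*} [PartialOrder S] (x y : S) : Prop :=
  ∀ f : ℕ → S, Monotone f → ∀ z : S, IsLUB (Set.range f) z → y ≤ z → ∃ n, x ≤ f n

class CuSemigroup (S : Type*) [AddCommMonoid S] [PartialOrder S] : Prop where
  zero_le : ∀ x : S, 0 ≤ x
  add_le_add_left : ∀ x y : S, x ≤ y → ∀ z : S, z + x ≤ z + y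
  exists_sup : ∀ f : ℕ → S, Monotone f → ∃ z : S, IsLUB (Set.range f) z
  exists_wb_seq : ∀ x : S, ∃ f : ℕ → S, (∀ n, WayBelow (f n) (f (n + 1))) ∧ IsLUB (Set.range f) x
  wb_add : ∀ x' x y' y : S, WayBelow x' x → WayBelow y' y → WayBelow (x' + y') (x + y)
  sup_add : ∀ f g : ℕ → S, Monotone f → Monotone g → ∀ a b : S,
    IsLUB (Set.range f) a → IsLUB (Set.range g) b →
    IsLUB (Set.range fun n => f n + g n) (a + b)

def cuDerivedSet {S : Type*} [PartialOrder S] (T : Set S) : Set S :=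
  { s | ∃ f : ℕ → S, (∀ n, f n ∈ T) ∧ (∀ n, WayBelow (f n) (f (n + 1))) ∧ IsLUB (Set.range f) s }

def SupClosedSet {S : Type*} [PartialOrder S] (T : Set S) : Prop :=
  ∀ f : ℕ → S, Monotone f → (∀ n, f n ∈ T) → ∀ z : S, IsLUB (Set.range f) z → z ∈ T

def IsSubCu {S : Type*} [AddCommMonoid S] [PartialOrder S] (T : AddSubmonoid S) : Prop :=
  CuSemigroup T ∧
  (∀ f : ℕ → T, Monotone f → ∀ z : T, IsLUB (Set.range f) z →
    IsLUB (Set.range fun n => (f n : S)) (z : S)) ∧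
  (∀ x y : T, WayBelow x y → WayBelow (x : S) (y : S))

def CountablyBased (S : Type*) [PartialOrder S] : Prop :=
  ∃ B : Set S, B.Countable ∧ ∀ x' x : S, WayBelow x' x → ∃ b ∈ B, WayBelow x' b ∧ WayBelow b x

def DimLE (S : Type*) [AddCommMonoid S] [PartialOrder S] (n : ℕ) : Prop :=
  ∀ (x' x : S) (r : ℕ) (y : Fin r → S),
    WayBelow x' x → WayBelow x (∑ j, y j) →
    ∃ z : Fin r → Fin (n + 1) → S,
      (∀ j k, WayBelow (z j k) (y j)) ∧
      WayBelow x' (∑ j, ∑ k, z j k) ∧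
      ∀ k, WayBelow (∑ j, z j k) x

noncomputable def CuDim (S : Type*) [AddCommMonoid S] [PartialOrder S] : ℕ∞ :=
  sInf {n : ℕ∞ | ∃ m : ℕ, n = (m : ℕ∞) ∧ DimLE S m}

section Generic
variable {S : Type*} [PartialOrder S]

theorem WayBelow.le {x y : S} (h : WayBelow x y) : x ≤ y := by
  obtain ⟨_, hn⟩ := h (fun _ => y) monotone_const y
    (by rw [Set.range_const]; exact isLUB_singleton) le_rfl
  exact hn

theorem WayBelow.mono_left {x' x y : S} (hle : x' ≤ x) (h : WayBelow x y) : WayBelow x' y :=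
  fun f hf z hz hyz => (h f hf z hz hyz).imp fun _ hn => hle.trans hn

theorem WayBelow.mono_right {x y y' : S} (h : WayBelow x y) (hle : y ≤ y') : WayBelow x y' :=
  fun f hf z hz hyz => h f hf z hz (hle.trans hyz)

theorem mono_of_wbseq {f : ℕ → S} (h : ∀ n, WayBelow (f n) (f (n + 1))) : Monotone f :=
  monotone_nat_of_le_succ fun n => (h n).le
end Generic

section Cu
variable {S : Type*} [AddCommMonoid S] [PartialOrder S] [CuSemigroup S]

theorem zero_wb (x : S) : WayBelow 0 x := fun f _ _ _ _ => ⟨0, CuSemigroup.zero_le _⟩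

theorem add_mono' {a b c d : S} (h1 : a ≤ b) (h2 : c ≤ d) : a + c ≤ b + d := by
  refine le_trans (CuSemigroup.add_le_add_left c d h2 a) ?_
  rw [add_comm a d, add_comm b d]
  exact CuSemigroup.add_le_add_left a b h1 d

theorem sum_mono' {r : ℕ} {u v : Fin r → S} (h : ∀ j, u j ≤ v j) : ∑ j, u j ≤ ∑ j, v j := by
  induction r with
  | zero => simp
  | succ n ih =>
    rw [Fin.sum_univ_succ, Fin.sum_univ_succ]
    exact add_mono' (h 0) (ih fun j => h j.succ)

theorem isLUB_sum {r : ℕ} (c : Fin r → ℕ → S) (hmono : ∀ j, Monotone (c j)) (y : Fin r → S)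
    (hy : ∀ j, IsLUB (Set.range (c j)) (y j)) :
    IsLUB (Set.range fun n => ∑ j, c j n) (∑ j, y j) := by
  induction r with
  | zero =>
    simp only [Finset.univ_eq_empty, Finset.sum_empty]
    rw [Set.range_const]; exact isLUB_singleton
  | succ n ih =>
    have h2 := ih (fun j => c j.succ) (fun j => hmono j.succ) (fun j => y j.succ)
      (fun j => hy j.succ)
    have := CuSemigroup.sup_add (c 0) (fun k => ∑ j : Fin n, c j.succ k) (hmono 0)
      (fun a b hab => sum_mono' fun j => (hmono j.succ) hab) (y 0) (∑ j : Fin n, y j.succ)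
      (hy 0) h2
    simpa [Fin.sum_univ_succ] using this

noncomputable def seqOf (x : S) : ℕ → S := (CuSemigroup.exists_wb_seq x).choose

theorem seqOf_wb (x : S) (n : ℕ) : WayBelow (seqOf x n) (seqOf x (n + 1)) :=
  (CuSemigroup.exists_wb_seq x).choose_spec.1 n

theorem seqOf_isLUB (x : S) : IsLUB (Set.range (seqOf x)) x :=
  (CuSemigroup.exists_wb_seq x).choose_spec.2

open Classical in
noncomputable def dimWit (m : ℕ) (x' x : S) (r : ℕ) (y : Fin r → S) :
    Fin r → Fin (m + 1) → S :=
  if h : DimLE S m ∧ WayBelow x' x ∧ WayBelow x (∑ j, y j) then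
    (h.1 x' x r y h.2.1 h.2.2).choose else fun _ _ => 0

theorem dimWit_spec (m : ℕ) (x' x : S) (r : ℕ) (y : Fin r → S) (hd : DimLE S m)
    (h1 : WayBelow x' x) (h2 : WayBelow x (∑ j, y j)) :
    (∀ j k, WayBelow (dimWit m x' x r y j k) (y j)) ∧
      WayBelow x' (∑ j, ∑ k, dimWit m x' x r y j k) ∧
      ∀ k, WayBelow (∑ j, dimWit m x' x r y j k) x := by
  have h : DimLE S m ∧ WayBelow x' x ∧ WayBelow x (∑ j, y j) := ⟨hd, h1, h2⟩
  simp only [dimWit, dif_pos h]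
  exact (h.1 x' x r y h.2.1 h.2.2).choose_spec
end Cu

section DSet
variable {S : Type*} [AddCommMonoid S] [PartialOrder S] [CuSemigroup S] {D : Set S}

theorem cuDerivedSet_mono {D' : Set S} (h : D ⊆ D') :
    cuDerivedSet D ⊆ cuDerivedSet D' := by
  rintro x ⟨f, h1, h2, h3⟩
  exact ⟨f, fun n => h (h1 n), h2, h3⟩

theorem exists_interp {x' x : S} (hx : x ∈ cuDerivedSet D) (h : WayBelow x' x) :
    ∃ b ∈ D, WayBelow x' b ∧ WayBelow b x := by
  obtain ⟨d, hdD, hdwb, hdlub⟩ := hx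
  obtain ⟨k, hk⟩ := h d (mono_of_wbseq hdwb) x hdlub le_rfl
  exact ⟨d (k + 1), hdD _, (hdwb k).mono_left hk,
    (hdwb (k + 1)).mono_right (hdlub.1 ⟨k + 2, rfl⟩)⟩

theorem cuDerivedSet_add (hadd : ∀ a ∈ D, ∀ b ∈ D, a + b ∈ D) {x y : S}
    (hx : x ∈ cuDerivedSet D) (hy : y ∈ cuDerivedSet D) : x + y ∈ cuDerivedSet D := by
  obtain ⟨c, hc1, hc2, hc3⟩ := hx
  obtain ⟨d, hd1, hd2, hd3⟩ := hy
  exact ⟨fun n => c n + d n, fun n => hadd _ (hc1 n) _ (hd1 n),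
    fun n => CuSemigroup.wb_add _ _ _ _ (hc2 n) (hd2 n),
    CuSemigroup.sup_add c d (mono_of_wbseq hc2) (mono_of_wbseq hd2) x y hc3 hd3⟩

theorem cuDerivedSet_zero (h0 : (0 : S) ∈ D) : (0 : S) ∈ cuDerivedSet D :=
  ⟨fun _ => 0, fun _ => h0, fun _ => zero_wb 0,
    by rw [Set.range_const]; exact isLUB_singleton⟩

theorem cuDerivedSet_supClosed : SupClosedSet (cuDerivedSet D) := by
  intro f hf hfT z hz
  choose d hdD hdwb hdlub using hfT
  have hdmono : ∀ n, Monotone (d n) := fun n => mono_of_wbseq (hdwb n)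
  have hdlef : ∀ n k, d n k ≤ f n := fun n k => (hdlub n).1 ⟨k, rfl⟩
  have hdwbf : ∀ n k, WayBelow (d n k) (f n) := fun n k => (hdwb n k).mono_right (hdlef n (k + 1))
  have key : ∀ (e : S) (p : ℕ), WayBelow e (f p) → ∀ i : ℕ,
      ∃ e' p', e' ∈ D ∧ WayBelow e e' ∧ d i.unpair.1 i.unpair.2 ≤ e' ∧ WayBelow e' (f p') := by
    intro e p hep i
    set n := i.unpair.1
    set k := i.unpair.2
    set q := max p n with hq
    obtain ⟨j1, hj1⟩ := (hep.mono_right (hf (le_max_left p n))) (d q) (hdmono q) (f q)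
      (hdlub q) le_rfl
    obtain ⟨j2, hj2⟩ := ((hdwbf n k).mono_right (hf (le_max_right p n))) (d q) (hdmono q)
      (f q) (hdlub q) le_rfl
    refine ⟨d q (max j1 j2 + 1), q, hdD q _, ?_, ?_, hdwbf q _⟩
    · exact (hdwb q (max j1 j2)).mono_left (hj1.trans (hdmono q (le_max_left _ _)))
    · exact (hj2.trans (hdmono q (le_max_right _ _))).trans ((hdmono q (Nat.le_succ _)))
  have key' : ∀ (ep : S × ℕ) (i : ℕ), ∃ ep' : S × ℕ,
      ep.1 ∈ D ∧ WayBelow ep.1 (f ep.2) →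
        ep'.1 ∈ D ∧ WayBelow ep.1 ep'.1 ∧ d i.unpair.1 i.unpair.2 ≤ ep'.1 ∧
          WayBelow ep'.1 (f ep'.2) := by
    intro ep i
    by_cases h : ep.1 ∈ D ∧ WayBelow ep.1 (f ep.2)
    · obtain ⟨e', p', h1, h2, h3, h4⟩ := key ep.1 ep.2 h.2 i
      exact ⟨(e', p'), fun _ => ⟨h1, h2, h3, h4⟩⟩
    · exact ⟨ep, fun hc => absurd hc h⟩
  choose next hnext using key'
  set g : ℕ → S × ℕ := fun i =>
    Nat.rec (motive := fun _ => S × ℕ) (d 0 0, 0) (fun i prev => next prev i) i with hg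
  have hgsucc : ∀ i, g (i + 1) = next (g i) i := fun i => rfl
  have hinv : ∀ i, (g i).1 ∈ D ∧ WayBelow (g i).1 (f (g i).2) := by
    intro i
    induction i with
    | zero => exact ⟨hdD 0 0, hdwbf 0 0⟩
    | succ i ih =>
      rw [hgsucc]
      have h := hnext (g i) i ih
      exact ⟨h.1, h.2.2.2⟩
  have hewb : ∀ i, WayBelow (g i).1 (g (i + 1)).1 := by
    intro i
    rw [hgsucc]
    exact (hnext (g i) i (hinv i)).2.1
  have hedom : ∀ n k, d n k ≤ (g (Nat.pair n k + 1)).1 := by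
    intro n k
    rw [hgsucc]
    have h := (hnext (g (Nat.pair n k)) (Nat.pair n k) (hinv _)).2.2.1
    simpa [Nat.unpair_pair] using h
  refine ⟨fun i => (g i).1, fun i => (hinv i).1, hewb, ?_, ?_⟩
  · rintro _ ⟨i, rfl⟩
    exact ((hinv i).2.le).trans (hz.1 ⟨(g i).2, rfl⟩)
  · intro u hu
    apply hz.2
    rintro _ ⟨n, rfl⟩
    apply (hdlub n).2
    rintro _ ⟨k, rfl⟩
    exact (hedom n k).trans (hu ⟨Nat.pair n k + 1, rfl⟩)
end DSet

structure GoodD {S : Type*} [AddCommMonoid S] [PartialOrder S] (D : Set S) : Prop where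
  add : ∀ a ∈ D, ∀ b ∈ D, a + b ∈ D
  zero : (0 : S) ∈ D
  rep : D ⊆ cuDerivedSet D

section Transfer
variable {S : Type*} [AddCommMonoid S] [PartialOrder S] [CuSemigroup S] {D : Set S}

def TmOf (D : Set S) (hD : GoodD D) : AddSubmonoid S where
  carrier := cuDerivedSet D
  add_mem' := fun ha hb => cuDerivedSet_add hD.add ha hb
  zero_mem' := cuDerivedSet_zero hD.zero

variable (hD : GoodD D)

theorem mem_TmOf {x : S} : x ∈ TmOf D hD ↔ x ∈ cuDerivedSet D := Iff.rfl

theorem coe_mono' {f : ℕ → ↥(TmOf D hD)} (hf : Monotone f) :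
    Monotone fun n => (f n : S) := fun a b hab => Subtype.coe_le_coe.2 (hf hab)

theorem TLUB_of_SLUB (f : ℕ → ↥(TmOf D hD)) (z : ↥(TmOf D hD))
    (h : IsLUB (Set.range fun n => (f n : S)) (z : S)) : IsLUB (Set.range f) z := by
  constructor
  · rintro _ ⟨n, rfl⟩
    exact Subtype.coe_le_coe.1 (h.1 ⟨n, rfl⟩)
  · intro u hu
    refine Subtype.coe_le_coe.1 (h.2 ?_)
    rintro _ ⟨n, rfl⟩
    exact Subtype.coe_le_coe.2 (hu ⟨n, rfl⟩)

theorem SLUB_of_TLUB (f : ℕ → ↥(TmOf D hD)) (hf : Monotone f) (z : ↥(TmOf D hD))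
    (h : IsLUB (Set.range f) z) : IsLUB (Set.range fun n => (f n : S)) (z : S) := by
  obtain ⟨w, hw⟩ := CuSemigroup.exists_sup (fun n => (f n : S)) (coe_mono' hD hf)
  have hwT : w ∈ TmOf D hD := cuDerivedSet_supClosed _ (coe_mono' hD hf) (fun n => (f n).2) w hw
  have h2 : IsLUB (Set.range f) (⟨w, hwT⟩ : ↥(TmOf D hD)) := TLUB_of_SLUB hD f _ hw
  obtain rfl : z = ⟨w, hwT⟩ := h.unique h2
  exact hw

theorem wbT_of_wbS {x y : ↥(TmOf D hD)} (h : WayBelow (x : S) (y : S)) : WayBelow x y := by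
  intro f hf z hz hyz
  obtain ⟨n, hn⟩ := h _ (coe_mono' hD hf) _ (SLUB_of_TLUB hD f hf z hz)
    (Subtype.coe_le_coe.2 hyz)
  exact ⟨n, Subtype.coe_le_coe.1 hn⟩

theorem wbS_of_wbT {x y : ↥(TmOf D hD)} (h : WayBelow x y) : WayBelow (x : S) (y : S) := by
  obtain ⟨c, hcD, hcwb, hclub⟩ := y.2
  set cT : ℕ → ↥(TmOf D hD) := fun n => ⟨c n, hD.rep (hcD n)⟩ with hcT
  have hcTmono : Monotone cT := fun a b hab => Subtype.coe_le_coe.1 (by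
    exact mono_of_wbseq hcwb hab)
  obtain ⟨k, hk⟩ := h cT hcTmono y (TLUB_of_SLUB hD cT y hclub) le_rfl
  exact ((hcwb k).mono_left (Subtype.coe_le_coe.2 hk)).mono_right (hclub.1 ⟨k + 1, rfl⟩)

theorem cuSemigroup_TmOf : CuSemigroup ↥(TmOf D hD) where
  zero_le x := Subtype.coe_le_coe.1 (by
    rw [ZeroMemClass.coe_zero]; exact CuSemigroup.zero_le (x : S))
  add_le_add_left x y h z := Subtype.coe_le_coe.1 (by
    push_cast
    exact CuSemigroup.add_le_add_left _ _ (Subtype.coe_le_coe.2 h) _)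
  exists_sup f hf := by
    obtain ⟨w, hw⟩ := CuSemigroup.exists_sup (fun n => (f n : S)) (coe_mono' hD hf)
    have hwT : w ∈ TmOf D hD :=
      cuDerivedSet_supClosed _ (coe_mono' hD hf) (fun n => (f n).2) w hw
    exact ⟨⟨w, hwT⟩, TLUB_of_SLUB hD f _ hw⟩
  exists_wb_seq x := by
    obtain ⟨c, hcD, hcwb, hclub⟩ := x.2
    refine ⟨fun n => ⟨c n, hD.rep (hcD n)⟩, fun n => wbT_of_wbS hD ?_, ?_⟩
    · exact hcwb n
    · exact TLUB_of_SLUB hD _ x hclub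
  wb_add x' x y' y hx hy := by
    apply wbT_of_wbS hD
    have := CuSemigroup.wb_add _ _ _ _ (wbS_of_wbT hD hx) (wbS_of_wbT hD hy)
    simpa using this
  sup_add f g hf hg a b ha hb := by
    apply TLUB_of_SLUB hD
    have := CuSemigroup.sup_add _ _ (coe_mono' hD hf) (coe_mono' hD hg) _ _
      (SLUB_of_TLUB hD f hf a ha) (SLUB_of_TLUB hD g hg b hb)
    simpa using this

theorem isSubCu_TmOf : IsSubCu (TmOf D hD) :=
  ⟨cuSemigroup_TmOf hD, fun f hf z hz => SLUB_of_TLUB hD f hf z hz,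
    fun _ _ h => wbS_of_wbT hD h⟩

theorem countablyBased_TmOf (hDc : D.Countable) : CountablyBased ↥(TmOf D hD) := by
  refine ⟨{t : ↥(TmOf D hD) | (t : S) ∈ D}, ?_, ?_⟩
  · exact (hDc.preimage Subtype.val_injective)
  · intro x' x h
    obtain ⟨b, hbD, h1, h2⟩ := exists_interp x.2 (wbS_of_wbT hD h)
    exact ⟨⟨b, hD.rep hbD⟩, hbD, wbT_of_wbS hD h1, wbT_of_wbS hD h2⟩
end Transfer

section Chain
variable {S : Type*} [AddCommMonoid S] [PartialOrder S] [CuSemigroup S]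

noncomputable def witsD (m : ℕ) (D : Set S) : Set S :=
  ⋃ (r : ℕ), ⋃ (j : Fin r), ⋃ (k : Fin (m + 1)),
    (fun p : S × S × (Fin r → S) => dimWit m p.1 p.2.1 r p.2.2 j k) ''
      {p | p.1 ∈ D ∧ p.2.1 ∈ D ∧ ∀ j, p.2.2 j ∈ D}

theorem witsD_countable (m : ℕ) {D : Set S} (hDc : D.Countable) :
    (witsD m D).Countable := by
  refine Set.countable_iUnion fun r => Set.countable_iUnion fun j =>
    Set.countable_iUnion fun k => Set.Countable.image ?_ _
  have hsub : {p : S × S × (Fin r → S) | p.1 ∈ D ∧ p.2.1 ∈ D ∧ ∀ j, p.2.2 j ∈ D} ⊆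
      D ×ˢ (D ×ˢ {w : Fin r → S | ∀ j, w j ∈ D}) := by
    rintro ⟨a, b, w⟩ ⟨h1, h2, h3⟩
    exact ⟨h1, h2, h3⟩
  refine Set.Countable.mono hsub ?_
  exact hDc.prod (hDc.prod (Set.countable_pi fun _ => hDc))

theorem mem_witsD (m : ℕ) {D : Set S} {a b : S} {r : ℕ} {w : Fin r → S}
    (ha : a ∈ D) (hb : b ∈ D) (hw : ∀ j, w j ∈ D) (j : Fin r) (k : Fin (m + 1)) :
    dimWit m a b r w j k ∈ witsD m D := by
  refine Set.mem_iUnion.2 ⟨r, Set.mem_iUnion.2 ⟨j, Set.mem_iUnion.2 ⟨k, ?_⟩⟩⟩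
  exact ⟨(a, b, w), ⟨ha, hb, hw⟩, rfl⟩

noncomputable def stepD (m : ℕ) (D : Set S) : Set S :=
  D ∪ Set.image2 (· + ·) D D ∪ (⋃ d ∈ D, Set.range (seqOf d)) ∪ witsD m D

theorem subset_stepD (m : ℕ) (D : Set S) : D ⊆ stepD m D :=
  fun _ h => Or.inl (Or.inl (Or.inl h))

theorem stepD_countable (m : ℕ) {D : Set S} (hDc : D.Countable) :
    (stepD m D).Countable := by
  refine (((hDc.union (hDc.image2 hDc _)).union ?_).union (witsD_countable m hDc))
  exact hDc.biUnion fun d _ => Set.countable_range _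

noncomputable def chainD (m : ℕ) (D0 : Set S) : ℕ → Set S
  | 0 => insert 0 D0
  | n + 1 => stepD m (chainD m D0 n)

theorem chainD_mono (m : ℕ) (D0 : Set S) : Monotone (chainD m D0) := by
  refine monotone_nat_of_le_succ fun n => ?_
  exact subset_stepD m _

noncomputable def DInf (m : ℕ) (D0 : Set S) : Set S := ⋃ n, chainD m D0 n

theorem chainD_subset_DInf (m : ℕ) (D0 : Set S) (n : ℕ) :
    chainD m D0 n ⊆ DInf m D0 := Set.subset_iUnion (chainD m D0) n

theorem DInf_countable (m : ℕ) {D0 : Set S} (hD0c : D0.Countable) :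
    (DInf m D0).Countable := by
  refine Set.countable_iUnion fun n => ?_
  induction n with
  | zero => exact Set.Countable.insert 0 hD0c
  | succ n ih => exact stepD_countable m ih

theorem exists_level {m : ℕ} {D0 : Set S} {x : S} (hx : x ∈ DInf m D0) :
    ∃ n, x ∈ chainD m D0 n := Set.mem_iUnion.1 hx

theorem goodD_DInf (m : ℕ) (D0 : Set S) : GoodD (DInf m D0) := by
  constructor
  · intro a ha b hb
    obtain ⟨na, hna⟩ := exists_level ha
    obtain ⟨nb, hnb⟩ := exists_level hb
    refine chainD_subset_DInf m D0 (max na nb + 1) ?_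
    refine Or.inl (Or.inl (Or.inr ?_))
    exact Set.mem_image2_of_mem (chainD_mono m D0 (le_max_left na nb) hna)
      (chainD_mono m D0 (le_max_right na nb) hnb)
  · exact chainD_subset_DInf m D0 0 (Set.mem_insert 0 D0)
  · intro d hd
    obtain ⟨n, hn⟩ := exists_level hd
    refine ⟨seqOf d, fun i => ?_, seqOf_wb d, seqOf_isLUB d⟩
    refine chainD_subset_DInf m D0 (n + 1) ?_
    exact Or.inl (Or.inr (Set.mem_biUnion hn ⟨i, rfl⟩))

theorem dimWit_mem_DInf (m : ℕ) (D0 : Set S) {a b : S} {r : ℕ} {w : Fin r → S}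
    (ha : a ∈ DInf m D0) (hb : b ∈ DInf m D0) (hw : ∀ j, w j ∈ DInf m D0)
    (j : Fin r) (k : Fin (m + 1)) : dimWit m a b r w j k ∈ DInf m D0 := by
  obtain ⟨na, hna⟩ := exists_level ha
  obtain ⟨nb, hnb⟩ := exists_level hb
  choose nw hnw using fun j => exists_level (hw j)
  set N := max (max na nb) (Finset.univ.sup nw) with hN
  refine chainD_subset_DInf m D0 (N + 1) (Or.inr ?_)
  refine mem_witsD m ?_ ?_ ?_ j k
  · exact chainD_mono m D0 ((le_max_left na nb).trans (le_max_left _ _)) hna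
  · exact chainD_mono m D0 ((le_max_right na nb).trans (le_max_left _ _)) hnb
  · intro j'
    exact chainD_mono m D0 ((Finset.le_sup (Finset.mem_univ j')).trans (le_max_right _ _)) (hnw j')
end Chain

section DimTransfer
variable {S : Type*} [AddCommMonoid S] [PartialOrder S] [CuSemigroup S]

theorem dimLE_TmOf (m : ℕ) (D0 : Set S) (hm : DimLE S m) :
    DimLE ↥(TmOf (DInf m D0) (goodD_DInf m D0)) m := by
  set hD := goodD_DInf m D0
  intro x' x r y hx'x hxy
  have hS1 : WayBelow (x' : S) (x : S) := wbS_of_wbT hD hx'x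
  have hS2 : WayBelow (x : S) (∑ j, (y j : S)) := by
    have := wbS_of_wbT hD hxy
    rwa [AddSubmonoidClass.coe_finset_sum] at this
  obtain ⟨dx, hdxD, hdxwb, hdxlub⟩ := x.2
  obtain ⟨k0, hk0⟩ := hS1 dx (mono_of_wbseq hdxwb) _ hdxlub le_rfl
  have hab : WayBelow (dx k0) (dx (k0 + 1)) := hdxwb k0
  have hbx : dx (k0 + 1) ≤ (x : S) := hdxlub.1 ⟨k0 + 1, rfl⟩
  have hyrep : ∀ j, ((y j : S)) ∈ cuDerivedSet (DInf m D0) := fun j => (y j).2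
  choose c hcD hcwb hclub using hyrep
  have hsumlub : IsLUB (Set.range fun n => ∑ j, c j n) (∑ j, (y j : S)) :=
    isLUB_sum c (fun j => mono_of_wbseq (hcwb j)) _ hclub
  obtain ⟨K, hK⟩ := hS2 _ (fun a b hab' => sum_mono' fun j => mono_of_wbseq (hcwb j) hab')
    _ hsumlub le_rfl
  set w : Fin r → S := fun j => c j K with hw
  have hbw : WayBelow (dx (k0 + 1)) (∑ j, w j) :=
    (hdxwb (k0 + 1)).mono_right ((hdxlub.1 ⟨k0 + 2, rfl⟩).trans hK)
  have hz := dimWit_spec m (dx k0) (dx (k0 + 1)) r w hm hab hbw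
  set z : Fin r → Fin (m + 1) → S := dimWit m (dx k0) (dx (k0 + 1)) r w with hzdef
  have hmem : ∀ j k, z j k ∈ TmOf (DInf m D0) hD := by
    intro j k
    refine hD.rep (dimWit_mem_DInf m D0 (hdxD k0) (hdxD (k0 + 1)) (fun j => hcD j K) j k)
  refine ⟨fun j k => ⟨z j k, hmem j k⟩, ?_, ?_, ?_⟩
  · intro j k
    refine wbT_of_wbS hD ?_
    exact (hz.1 j k).mono_right ((hclub j).1 ⟨K, rfl⟩)
  · refine wbT_of_wbS hD ?_
    have hcoe : ((∑ j, ∑ k, (⟨z j k, hmem j k⟩ : ↥(TmOf (DInf m D0) hD)) : _) : S) =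
        ∑ j, ∑ k, z j k := by
      rw [AddSubmonoidClass.coe_finset_sum]
      exact Finset.sum_congr rfl fun j _ => by rw [AddSubmonoidClass.coe_finset_sum]
    rw [hcoe]
    exact (hz.2.1).mono_left hk0
  · intro k
    refine wbT_of_wbS hD ?_
    have hcoe : ((∑ j, (⟨z j k, hmem j k⟩ : ↥(TmOf (DInf m D0) hD)) : _) : S) =
        ∑ j, z j k := AddSubmonoidClass.coe_finset_sum _ _
    rw [hcoe]
    exact (hz.2.2 k).mono_right hbx
end DimTransfer

theorem t0_rep {S : Type*} [AddCommMonoid S] [PartialOrder S] [CuSemigroup S]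
    (T0 : AddSubmonoid S) (h0 : IsSubCu T0) {B0 : Set ↥T0}
    (hB0basis : ∀ x' x : ↥T0, WayBelow x' x → ∃ b ∈ B0, WayBelow x' b ∧ WayBelow b x) :
    (T0 : Set S) ⊆ cuDerivedSet (Subtype.val '' B0) := by
  intro t ht
  obtain ⟨hcu, hlub, hwb⟩ := h0
  obtain ⟨f, hfwb, hflub⟩ := hcu.exists_wb_seq (⟨t, ht⟩ : ↥T0)
  choose b hbB hb1 hb2 using fun n => hB0basis (f n) (f (n + 1)) (hfwb n)
  have hbwb : ∀ n, WayBelow (b n) (b (n + 1)) := fun n => (hb2 n).mono_right (hb1 (n + 1)).le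
  have hblub : IsLUB (Set.range b) (⟨t, ht⟩ : ↥T0) := by
    constructor
    · rintro _ ⟨n, rfl⟩
      exact ((hb2 n).le).trans (hflub.1 ⟨n + 1, rfl⟩)
    · intro u hu
      apply hflub.2
      rintro _ ⟨n, rfl⟩
      exact (hb1 n).le.trans (hu ⟨n, rfl⟩)
  exact ⟨fun n => (b n : S), fun n => ⟨b n, hbB n, rfl⟩, fun n => hwb _ _ (hbwb n),
    hlub b (mono_of_wbseq hbwb) _ hblub⟩

theorem exists_countablyBased_subCu_dim_le {S : Type*} [AddCommMonoid S] [PartialOrder S]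
    [CuSemigroup S] (T0 : AddSubmonoid S) (h0 : IsSubCu T0) (hcb : CountablyBased ↥T0) :
    ∃ T : AddSubmonoid S, IsSubCu T ∧ CountablyBased ↥T ∧ T0 ≤ T ∧ CuDim ↥T ≤ CuDim S := by
  classical
  obtain ⟨B0, hB0c, hB0basis⟩ := hcb
  by_cases hex : ∃ m, DimLE S m
  · set m := Nat.find hex with hmdef
    have hm : DimLE S m := Nat.find_spec hex
    set D0 : Set S := Subtype.val '' B0 with hD0
    have hD0c : D0.Countable := hB0c.image _
    set hD := goodD_DInf m D0 with hDdef
    refine ⟨TmOf (DInf m D0) hD, isSubCu_TmOf hD,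
      countablyBased_TmOf hD (DInf_countable m hD0c), ?_, ?_⟩
    · intro t ht
      refine cuDerivedSet_mono ?_ (t0_rep T0 h0 hB0basis ht)
      exact (Set.subset_insert 0 D0).trans (chainD_subset_DInf m D0 0)
    · refine le_sInf ?_
      rintro n ⟨m', rfl, hm'⟩
      calc CuDim ↥(TmOf (DInf m D0) hD) ≤ (m : ℕ∞) :=
            sInf_le ⟨m, rfl, dimLE_TmOf m D0 hm⟩
        _ ≤ (m' : ℕ∞) := by exact_mod_cast Nat.find_min' hex hm'
  · refine ⟨T0, h0, ⟨B0, hB0c, hB0basis⟩, le_refl T0, ?_⟩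
    refine le_sInf ?_
    rintro n ⟨m', rfl, hm'⟩
    exact absurd ⟨m', hm'⟩ hex
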